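/- arXiv:2402.13151 — 7 statements merged into one kernel-verified Lean document; each statement's English description precedes it below -/
import Mathlib

section
/- Let f : 2^V → ℝ≥0 be a monotone submodular function on a finite set V. Define f' : 2^(V ∪ {*}) → ℝ≥0 (where * ∉ V) by f'(S) = f(S) if * ∉ S, and f'(S) = f(V \ (S \ {*})) if * ∈ S. Then f' is submodular, i.e., f'(T ∪ {x}) − f'(T) ≥ f'(U ∪ {x}) − f'(U) for all T ⊆ U ⊆ V ∪ {*} and x ∈ (V ∪ {*}) \ U. -/
def down {V : Type*} [Fintype V] [DecidableEq V] (S : Finset (Option V)) : Finset V :=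
  Finset.univ.filter (fun v => some v ∈ S)

noncomputable def symmetrize {V : Type*} [Fintype V] [DecidableEq V] (f : Finset V → ℝ)
    (S : Finset (Option V)) : ℝ :=
  if none ∈ S then f (Finset.univ \ down S) else f (down S)

lemma mem_down {V : Type*} [Fintype V] [DecidableEq V] {S : Finset (Option V)} {v : V} :
    v ∈ down S ↔ some v ∈ S := by
  simp [down]

lemma down_insert_none {V : Type*} [Fintype V] [DecidableEq V] (S : Finset (Option V)) :
    down (insert none S) = down S := by
  ext v; simp [mem_down]

lemma down_insert_some {V : Type*} [Fintype V] [DecidableEq V] (S : Finset (Option V)) (v : V) :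
    down (insert (some v) S) = insert v (down S) := by
  ext w; simp [mem_down]

lemma down_subset {V : Type*} [Fintype V] [DecidableEq V] {S T : Finset (Option V)}
    (h : S ⊆ T) : down S ⊆ down T := by
  intro v hv; rw [mem_down] at *; exact h hv

/-- the symmetrization of a monotone submodular `f : 2^V → ℝ≥0` is submodular. -/
theorem symmetrize_submodular {V : Type*} [Fintype V] [DecidableEq V] (f : Finset V → ℝ)
    (hnn : ∀ S, 0 ≤ f S)
    (hmono : ∀ S T : Finset V, S ⊆ T → f S ≤ f T)
    (hsub : ∀ S T : Finset V, S ⊆ T → ∀ x ∉ T,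
      f (insert x T) - f T ≤ f (insert x S) - f S) :
    ∀ T U : Finset (Option V), T ⊆ U → ∀ x ∉ U,
      symmetrize f (insert x U) - symmetrize f U ≤
        symmetrize f (insert x T) - symmetrize f T := by
  intro T U hTU x hxU
  have hxT : x ∉ T := fun h => hxU (hTU h)
  have hAB : down T ⊆ down U := down_subset hTU
  cases x with
  | none =>
    have hnU : none ∉ U := hxU
    have hnT : none ∉ T := hxT
    simp only [symmetrize, if_pos (Finset.mem_insert_self none U),
      if_pos (Finset.mem_insert_self none T), if_neg hnU, if_neg hnT,
      down_insert_none]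
    have h1 : f (Finset.univ \ down U) ≤ f (Finset.univ \ down T) :=
      hmono _ _ (Finset.sdiff_subset_sdiff (le_refl _) hAB)
    have h2 : f (down T) ≤ f (down U) := hmono _ _ hAB
    linarith
  | some v =>
    have hvU : v ∉ down U := fun h => hxU (mem_down.mp h)
    have hvT : v ∉ down T := fun h => hvU (hAB h)
    have hni : (none : Option V) ∉ insert (some v) U ↔ none ∉ U := by simp
    by_cases hnU : none ∈ U
    · have hnU' : none ∈ insert (some v) U := Finset.mem_insert_of_mem hnU
      by_cases hnT : none ∈ T
      · have hnT' : none ∈ insert (some v) T := Finset.mem_insert_of_mem hnT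
        simp only [symmetrize, if_pos hnU, if_pos hnT, if_pos hnU', if_pos hnT',
          down_insert_some]
        -- need f(univ \ insert v B) - f(univ \ B) ≤ f(univ \ insert v A) - f(univ \ A)
        set A := down T
        set B := down U
        have hvA : v ∈ Finset.univ \ A := by simp [hvT]
        have hvB : v ∈ Finset.univ \ B := by simp [hvU]
        have heA : Finset.univ \ insert v A = (Finset.univ \ A).erase v := by
          ext w; simp [Finset.mem_erase, and_comm, Finset.mem_sdiff, Finset.mem_insert,
            not_or]
        have heB : Finset.univ \ insert v B = (Finset.univ \ B).erase v := by
          ext w; simp [Finset.mem_erase, and_comm, Finset.mem_sdiff, Finset.mem_insert,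
            not_or]
        rw [heA, heB]
        have hsub' := hsub ((Finset.univ \ B).erase v) ((Finset.univ \ A).erase v)
          (Finset.erase_subset_erase v (Finset.sdiff_subset_sdiff (le_refl _) hAB))
          v (Finset.notMem_erase v _)
        rw [Finset.insert_erase hvA, Finset.insert_erase hvB] at hsub'
        linarith
      · have hnT' : (none : Option V) ∉ insert (some v) T := by simp [hnT]
        simp only [symmetrize, if_pos hnU, if_neg hnT, if_pos hnU', if_neg hnT',
          down_insert_some]
        have h1 : f (Finset.univ \ insert v (down U)) ≤ f (Finset.univ \ down U) :=
          hmono _ _ (Finset.sdiff_subset_sdiff (le_refl _)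
            (Finset.subset_insert _ _))
        have h2 : f (down T) ≤ f (insert v (down T)) :=
          hmono _ _ (Finset.subset_insert _ _)
        linarith
    · have hnT : none ∉ T := fun h => hnU (hTU h)
      have hnU' : (none : Option V) ∉ insert (some v) U := by simp [hnU]
      have hnT' : (none : Option V) ∉ insert (some v) T := by simp [hnT]
      simp only [symmetrize, if_neg hnU, if_neg hnT, if_neg hnU', if_neg hnT',
        down_insert_some]
      exact hsub _ _ hAB v hvU
end

section
/- For any directed hypergraph H = (V,E) on n vertices with edge weights w_e ≥ 0, any directed hyperedge e = (L(e), R(e)) with L(e), R(e) ⊆ V nonempty, and any x ∈ ℝ^n: define the lifted vector ϑ(x) ∈ ℝ^(V×V ∪ {*}) by ϑ(x)_{(u,v)} = max(x_u − x_v, 0) and ϑ(x)_* = 0, and the lifted hyperedge φ(e) = (L(e) × R(e)) ∪ {*}. Then max_{u ∈ L(e), v ∈ R(e)} (max(x_u − x_v, 0))^2 = max_{y,z ∈ φ(e)} (ϑ(x)_y − ϑ(x)_z)^2. -/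
/-- The lifted vector `ϑ(x) ∈ ℝ^((V×V) ∪ {*})`, with `* = none`:
`ϑ(x)_{(u,v)} = max(x_u − x_v, 0)` and `ϑ(x)_* = 0`. -/
noncomputable def liftVec {V : Type*} (x : V → ℝ) : Option (V × V) → ℝ
  | none => 0
  | some (u, v) => max (x u - x v) 0

/-- The lifted hyperedge `φ(e) = (L(e) × R(e)) ∪ {*}`. -/
def liftEdge {V : Type*} [DecidableEq V] (L R : Finset V) : Finset (Option (V × V)) :=
  insert none ((L ×ˢ R).image some)

lemma liftVec_nonneg {V : Type*} (x : V → ℝ) (y : Option (V × V)) : 0 ≤ liftVec x y := by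
  cases y with
  | none => simp [liftVec]
  | some p => obtain ⟨u, v⟩ := p; simp [liftVec, le_max_right]

lemma abs_sub_le_max {a b : ℝ} (ha : 0 ≤ a) (hb : 0 ≤ b) : |a - b| ≤ max a b := by
  rw [abs_sub_le_iff]
  constructor <;> [nlinarith [le_max_left a b]; nlinarith [le_max_right a b]]

/-- the directed energy of a hyperedge equals the undirected energy of
its lift at the lifted vector. -/
theorem lift_edge_energy {V : Type*} [DecidableEq V] (L R : Finset V)
    (hL : L.Nonempty) (hR : R.Nonempty) (x : V → ℝ) :
    (L ×ˢ R).sup' (hL.product hR) (fun p => (max (x p.1 - x p.2) 0) ^ 2) =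
      (liftEdge L R ×ˢ liftEdge L R).sup'
        ((Finset.insert_nonempty _ _).product (Finset.insert_nonempty _ _))
        (fun p => (liftVec x p.1 - liftVec x p.2) ^ 2) := by
  set S := (L ×ˢ R).sup' (hL.product hR) (fun p => (max (x p.1 - x p.2) 0) ^ 2) with hS
  have hS0 : 0 ≤ S := by
    obtain ⟨u, hu⟩ := hL
    obtain ⟨v, hv⟩ := hR
    exact le_trans (sq_nonneg (max (x u - x v) 0))
      (Finset.le_sup' (fun p => (max (x p.1 - x p.2) 0) ^ 2) (Finset.mk_mem_product hu hv))
  -- key: for any y in liftEdge, (liftVec x y)^2 ≤ S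
  have key : ∀ y ∈ liftEdge L R, (liftVec x y) ^ 2 ≤ S := by
    intro y hy
    rcases Finset.mem_insert.mp hy with h | h
    · subst h; simpa [liftVec] using hS0
    · obtain ⟨p, hp, rfl⟩ := Finset.mem_image.mp h
      obtain ⟨u, v⟩ := p
      show max (x u - x v) 0 ^ 2 ≤ S
      exact Finset.le_sup' (fun p => (max (x p.1 - x p.2) 0) ^ 2) hp
  apply le_antisymm
  · apply Finset.sup'_le
    intro p hp
    have hmem : (some p, none) ∈ liftEdge L R ×ˢ liftEdge L R :=
      Finset.mk_mem_product (Finset.mem_insert_of_mem (Finset.mem_image_of_mem _ hp))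
        (Finset.mem_insert_self _ _)
    have := Finset.le_sup' (fun q => (liftVec x q.1 - liftVec x q.2) ^ 2) hmem
    simpa [liftVec] using this
  · apply Finset.sup'_le
    rintro ⟨y, z⟩ hyz
    rw [Finset.mem_product] at hyz
    have hy := key y hyz.1
    have hz := key z hyz.2
    have h1 : (liftVec x y - liftVec x z) ^ 2 ≤ max (liftVec x y) (liftVec x z) ^ 2 := by
      have := abs_sub_le_max (liftVec_nonneg x y) (liftVec_nonneg x z)
      nlinarith [abs_nonneg (liftVec x y - liftVec x z), sq_abs (liftVec x y - liftVec x z),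
        le_max_left (liftVec x y) (liftVec x z), liftVec_nonneg x y, liftVec_nonneg x z]
    rcases max_cases (liftVec x y) (liftVec x z) with ⟨h, _⟩ | ⟨h, _⟩ <;>
      rw [h] at h1 <;> [exact h1.trans hy; exact h1.trans hz]
end

section
/- Let H = (V,E) be a directed hypergraph on n vertices with nonnegative edge weights. Define ψ(H) to be the undirected hypergraph on vertex set (V × V) ∪ {*} whose hyperedges are φ(e) = (L(e) × R(e)) ∪ {*} for e ∈ E (with the same weights), and for x ∈ ℝ^V define ϑ(x) ∈ ℝ^((V×V)∪{*}) by ϑ(x)_{(u,v)} = max(x_u − x_v, 0), ϑ(x)_* = 0. Then for all x ∈ ℝ^V: Σ_{e∈E} w_e · max_{u∈L(e), v∈R(e)} (max(x_u − x_v,0))^2 = Σ_{e∈E} w_e · max_{y,z ∈ φ(e)} (ϑ(x)_y − ϑ(x)_z)^2. -/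
lemma sq_sub_le_max_sq {a b : ℝ} (ha : 0 ≤ a) (hb : 0 ≤ b) :
    (a - b) ^ 2 ≤ max (a ^ 2) (b ^ 2) := by
  rcases le_total a b with h | h
  · exact le_trans (by nlinarith) (le_max_right _ _)
  · exact le_trans (by nlinarith) (le_max_left _ _)

/-- the directed Laplacian quadratic form of `H` equals the undirected
Laplacian quadratic form of the lift `ψ(H)` at the lifted vector `ϑ(x)`, for all `x`. -/
theorem lift_quadratic_form {V ι : Type*} [DecidableEq V] [Fintype ι]
    (L R : ι → Finset V) (hL : ∀ i, (L i).Nonempty) (hR : ∀ i, (R i).Nonempty)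
    (w : ι → ℝ) (hw : ∀ i, 0 ≤ w i) (x : V → ℝ) :
    ∑ i, w i * (L i ×ˢ R i).sup' ((hL i).product (hR i))
        (fun p => (max (x p.1 - x p.2) 0) ^ 2) =
      ∑ i, w i * (liftEdge (L i) (R i) ×ˢ liftEdge (L i) (R i)).sup'
        ((Finset.insert_nonempty _ _).product (Finset.insert_nonempty _ _))
        (fun p => (liftVec x p.1 - liftVec x p.2) ^ 2) := by
  refine Finset.sum_congr rfl fun i _ => ?_
  congr 1
  set S := L i ×ˢ R i with hS
  have hSne : S.Nonempty := (hL i).product (hR i)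
  -- key: value of liftVec squared on liftEdge is ≤ sup over S
  have key : ∀ y ∈ liftEdge (L i) (R i),
      (liftVec x y) ^ 2 ≤ S.sup' hSne (fun p => (max (x p.1 - x p.2) 0) ^ 2) := by
    intro y hy
    rw [liftEdge, Finset.mem_insert] at hy
    rcases hy with rfl | hy
    · simp only [liftVec]
      obtain ⟨p, hp⟩ := hSne
      calc (0:ℝ)^2 = 0 := by ring
        _ ≤ (max (x p.1 - x p.2) 0) ^ 2 := by positivity
        _ ≤ _ := Finset.le_sup' (fun p : V × V => (max (x p.1 - x p.2) 0) ^ 2) hp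
    · obtain ⟨p, hp, rfl⟩ := Finset.mem_image.mp hy
      cases p with | mk u v =>
        show (max (x u - x v) 0) ^ 2 ≤ _
        exact Finset.le_sup' (fun p : V × V => (max (x p.1 - x p.2) 0) ^ 2) hp
  apply le_antisymm
  · apply Finset.sup'_le
    rintro ⟨u, v⟩ huv
    rw [Finset.mem_product] at huv
    have hm : (some (u, v), (none : Option (V × V))) ∈
        liftEdge (L i) (R i) ×ˢ liftEdge (L i) (R i) := by
      rw [Finset.mem_product]
      constructor
      · rw [liftEdge, Finset.mem_insert]
        right
        exact Finset.mem_image.mpr ⟨(u, v), Finset.mem_product.mpr huv, rfl⟩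
      · exact Finset.mem_insert_self _ _
    have := Finset.le_sup'
      (fun p : Option (V × V) × Option (V × V) => (liftVec x p.1 - liftVec x p.2) ^ 2) hm
    simpa [liftVec] using this
  · apply Finset.sup'_le
    rintro ⟨y, z⟩ hyz
    rw [Finset.mem_product] at hyz
    calc (liftVec x y - liftVec x z) ^ 2
        ≤ max ((liftVec x y) ^ 2) ((liftVec x z) ^ 2) :=
          sq_sub_le_max_sq (liftVec_nonneg x y) (liftVec_nonneg x z)
      _ ≤ _ := max_le (key y hyz.1) (key z hyz.2)
end

section
/- Let H be a directed hypergraph on vertex set V, ψ(H) its undirected lift on (V×V)∪{*}, and suppose Ĥ' is a reweighted sub-hypergraph of ψ(H) such that (1−ε)·ϑ(x)ᵀL_{ψ(H)}ϑ(x) ≤ ϑ(x)ᵀL_{Ĥ'}ϑ(x) ≤ (1+ε)·ϑ(x)ᵀL_{ψ(H)}ϑ(x) holds for all lifted vectors ϑ(x) with x ∈ ℝ^V. Then the directed hypergraph Ĥ obtained by applying φ^{-1} to each hyperedge of Ĥ' (keeping weights) satisfies (1−ε)·xᵀL_H x ≤ xᵀL_Ĥ x ≤ (1+ε)·xᵀL_H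 x for all x ∈ ℝ^V. -/
/-- The undirected energy of the lifted hyperedge `φ(e)` at a vector `y`. -/
noncomputable def undEnergy {V : Type*} [DecidableEq V] (L R : Finset V)
    (y : Option (V × V) → ℝ) : ℝ :=
  (liftEdge L R ×ˢ liftEdge L R).sup'
    ((Finset.insert_nonempty _ _).product (Finset.insert_nonempty _ _))
    (fun p => (y p.1 - y p.2) ^ 2)

/-- The directed energy of the hyperedge `e = (L, R)` at a vector `x`. -/
noncomputable def dirEnergy {V : Type*} [DecidableEq V] (L R : Finset V)
    (hL : L.Nonempty) (hR : R.Nonempty) (x : V → ℝ) : ℝ :=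
  (L ×ˢ R).sup' (hL.product hR) (fun p => (max (x p.1 - x p.2) 0) ^ 2)

lemma und_eq_dir {V : Type*} [DecidableEq V] (L R : Finset V)
    (hL : L.Nonempty) (hR : R.Nonempty) (x : V → ℝ) :
    undEnergy L R (liftVec x) = dirEnergy L R hL hR x := by
  unfold undEnergy dirEnergy
  have hS0 : (0:ℝ) ≤ (L ×ˢ R).sup' (hL.product hR)
      (fun p => (max (x p.1 - x p.2) 0) ^ 2) := by
    obtain ⟨p, hp⟩ := hL.product hR
    calc (0:ℝ) ≤ (max (x p.1 - x p.2) 0) ^ 2 := sq_nonneg _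
      _ ≤ _ := Finset.le_sup' (fun p => (max (x p.1 - x p.2) 0) ^ 2) hp
  set S := (L ×ˢ R).sup' (hL.product hR) (fun p => (max (x p.1 - x p.2) 0) ^ 2) with hS
  have hkey : ∀ c ∈ liftEdge L R, 0 ≤ liftVec x c ∧ (liftVec x c) ^ 2 ≤ S := by
    intro c hc
    simp only [liftEdge, Finset.mem_insert, Finset.mem_image] at hc
    rcases hc with rfl | ⟨p, hp, rfl⟩
    · simpa [liftVec] using hS0
    · obtain ⟨u, v⟩ := p
      exact ⟨le_max_right _ _, Finset.le_sup' (fun p => (max (x p.1 - x p.2) 0) ^ 2) hp⟩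
  apply le_antisymm
  · apply Finset.sup'_le
    rintro ⟨a, b⟩ hab
    rw [Finset.mem_product] at hab
    obtain ⟨ha0, haS⟩ := hkey a hab.1
    obtain ⟨hb0, hbS⟩ := hkey b hab.2
    simp only
    rcases le_total (liftVec x a) (liftVec x b) with h | h
    · nlinarith
    · nlinarith
  · apply Finset.sup'_le
    rintro ⟨u, v⟩ huv
    have h1 : (some (u, v), (none : Option (V × V))) ∈ liftEdge L R ×ˢ liftEdge L R := by
      rw [Finset.mem_product]
      exact ⟨Finset.mem_insert_of_mem (Finset.mem_image_of_mem _ huv),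
        Finset.mem_insert_self _ _⟩
    have := Finset.le_sup' (fun p : Option (V × V) × Option (V × V) =>
      (liftVec x p.1 - liftVec x p.2) ^ 2) h1
    simpa [liftVec] using this

/-- if a reweighting `wHat` of the lifted undirected hypergraph `ψ(H)`
`(1±ε)`-approximates its quadratic form on all lifted vectors `ϑ(x)`, then unlifting
(keeping the weights `wHat`) gives a `(1±ε)` directed spectral sparsifier of `H`. -/
theorem unlift_sparsifier {V ι : Type*} [DecidableEq V] [Fintype ι]
    (L R : ι → Finset V) (hL : ∀ i, (L i).Nonempty) (hR : ∀ i, (R i).Nonempty)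
    (w wHat : ι → ℝ) (hw : ∀ i, 0 ≤ w i) (hwHat : ∀ i, 0 ≤ wHat i) (ε : ℝ)
    (happrox : ∀ x : V → ℝ,
      (1 - ε) * ∑ i, w i * undEnergy (L i) (R i) (liftVec x) ≤
          ∑ i, wHat i * undEnergy (L i) (R i) (liftVec x) ∧
        ∑ i, wHat i * undEnergy (L i) (R i) (liftVec x) ≤
          (1 + ε) * ∑ i, w i * undEnergy (L i) (R i) (liftVec x)) :
    ∀ x : V → ℝ,
      (1 - ε) * ∑ i, w i * dirEnergy (L i) (R i) (hL i) (hR i) x ≤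
          ∑ i, wHat i * dirEnergy (L i) (R i) (hL i) (hR i) x ∧
        ∑ i, wHat i * dirEnergy (L i) (R i) (hL i) (hR i) x ≤
          (1 + ε) * ∑ i, w i * dirEnergy (L i) (R i) (hL i) (hR i) x := by
  intro x
  simp only [← und_eq_dir (hL := hL _) (hR := hR _)]
  exact happrox x
end

section
/- Let H₁, …, Hₙ be undirected hypergraphs on a common vertex set V with |V| = n, where Hᵢ = (V, Eᵢ) and each hyperedge is a nonempty subset of V. Let W = {w₁, …, wₙ} be n new vertices, and let G be the directed hypergraph on V ∪ W with directed hyperedges (e, {wᵢ}) for each i and each e ∈ Eᵢ (tail set e ⊆ V, head set {wᵢ}). Then for every i and every S ⊆ V, the number of directed hyperedges of G crossing the cut S ∪ (W \ {wᵢ}) equals |{e ∈ Eᵢ : e ∩ S ≠ ∅}|. -/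
/-- The edge set of the directed hypergraph `G` built from the undirected hypergraphs
`Hᵢ = (V, E i)`: one directed hyperedge `(e, {wᵢ})` (tail `e ⊆ V`, head `{wᵢ}`)
for each `i` and each `e ∈ E i`.  Edges are encoded as pairs `(e, i)`. -/
def bigEdges {V I : Type*} [Fintype V] [DecidableEq V] [Fintype I] [DecidableEq I]
    (E : I → Finset (Finset V)) : Finset (Finset V × I) :=
  Finset.univ.filter (fun p => p.1 ∈ E p.2)

/-- The directed hyperedge `(e, {wᵢ})` crosses the cut `C ⊆ V ⊕ I`. -/
def crosses {V I : Type*} [Fintype V] [DecidableEq V] [Fintype I] [DecidableEq I]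
    (p : Finset V × I) (C : Finset (V ⊕ I)) : Prop :=
  (p.1.image Sum.inl ∩ C).Nonempty ∧ (({Sum.inr p.2} : Finset (V ⊕ I)) \ C).Nonempty

instance {V I : Type*} [Fintype V] [DecidableEq V] [Fintype I] [DecidableEq I]
    (p : Finset V × I) (C : Finset (V ⊕ I)) : Decidable (crosses p C) := by
  unfold crosses; infer_instance

/-- The cut `S ∪ (W \ {wᵢ})` of the big directed hypergraph. -/
def bigCut {V I : Type*} [Fintype V] [DecidableEq V] [Fintype I] [DecidableEq I]
    (S : Finset V) (i : I) : Finset (V ⊕ I) :=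
  S.image Sum.inl ∪ (Finset.univ.erase i).image Sum.inr

/-!
The head `wⱼ` of an edge `(e, {wⱼ})` lies outside the cut `S ∪ (W \ {wᵢ})` exactly when `j = i`,
and its tail meets the cut exactly when `e` meets `S`; so the crossing edges are the copies
`(e, {wᵢ})` of the edges `e` of `Hᵢ` that meet `S`.
-/

section

variable {V I : Type*} [Fintype V] [DecidableEq V] [Fintype I] [DecidableEq I]

lemma image_inl_inter_bigCut (e S : Finset V) (i : I) :
    e.image Sum.inl ∩ bigCut S i = (e ∩ S).image Sum.inl := by
  ext (v | j) <;> simp [bigCut]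

lemma singleton_inr_sdiff_bigCut_nonempty_iff (S : Finset V) (i j : I) :
    (({Sum.inr j} : Finset (V ⊕ I)) \ bigCut S i).Nonempty ↔ j = i := by
  simp [bigCut, Finset.sdiff_nonempty]

lemma crosses_bigCut_iff (p : Finset V × I) (S : Finset V) (i : I) :
    crosses p (bigCut S i) ↔ p.2 = i ∧ (p.1 ∩ S).Nonempty := by
  rw [crosses, image_inl_inter_bigCut, Finset.image_nonempty,
    singleton_inr_sdiff_bigCut_nonempty_iff, and_comm]

lemma bigEdges_filter_crosses_bigCut (E : I → Finset (Finset V)) (S : Finset V) (i : I) :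
    (bigEdges E).filter (fun p => crosses p (bigCut S i)) =
      ((E i).filter fun e => (e ∩ S).Nonempty).map (Function.Embedding.sectL _ i) := by
  ext ⟨e, j⟩
  simp only [bigEdges, crosses_bigCut_iff, Finset.mem_filter, Finset.mem_univ, true_and,
    Finset.mem_map, Function.Embedding.sectL_apply, Prod.mk.injEq]
  constructor
  · rintro ⟨he, rfl, hS⟩
    exact ⟨e, ⟨he, hS⟩, rfl, rfl⟩
  · rintro ⟨e, ⟨he, hS⟩, rfl, rfl⟩
    exact ⟨he, rfl, hS⟩

end

theorem directed_simulates_undirected_general {V I : Type*}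
    [Fintype V] [DecidableEq V] [Fintype I] [DecidableEq I]
    (E : I → Finset (Finset V))
    (i : I) (S : Finset V) :
    ((bigEdges E).filter (fun p => crosses p (bigCut S i))).card =
      ((E i).filter (fun e => (e ∩ S).Nonempty)).card := by
  rw [bigEdges_filter_crosses_bigCut, Finset.card_map]

/-- the number of directed hyperedges of `G` crossing `S ∪ (W \ {wᵢ})`
equals the number of hyperedges of `Hᵢ` meeting `S`. -/
theorem directed_simulates_undirected {V I : Type*}
    [Fintype V] [DecidableEq V] [Fintype I] [DecidableEq I]
    (hcard : Fintype.card I = Fintype.card V)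
    (E : I → Finset (Finset V)) (hE : ∀ i, ∀ e ∈ E i, e.Nonempty)
    (i : I) (S : Finset V) :
    ((bigEdges E).filter (fun p => crosses p (bigCut S i))).card =
      ((E i).filter (fun e => (e ∩ S).Nonempty)).card :=
  directed_simulates_undirected_general E i S
end

section
/- Let H = (V, E) be a monotone submodular hypergraph, and let H' be the symmetric submodular hypergraph on V ∪ {*} with hyperedges e' = e ∪ {*} and splitting functions g_e' given by the symmetrization g_e'(S) = g_e(S) for S ⊆ e and g_e'(S) = g_e(e \ (S \ {*})) for * ∈ S. Suppose Ĥ' is a reweighted sub-hypergraph of H' such that (1−ε)·cut_{H'}(S) ≤ cut_{Ĥ'}(S) ≤ (1+ε)·cut_{H'}(S) for all S ⊆ V ∪ {*}. Then replacing each e' by e (keeping the weights) yields a reweighted sub-hypergraph Ĥ of H with (1−ε)·cut_H(S) ≤ cut_Ĥ(S) ≤ (1+ε)·cut_H(S) for all S ⊆ V. -/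
/-- The symmetrization of the splitting function `g` of a hyperedge `e`:
`g'(T) = g(T)` if `* ∉ T` and `g'(T) = g(e \ (T \ {*}))` if `* ∈ T`. -/
noncomputable def symmSplit {V : Type*} [Fintype V] [DecidableEq V]
    (e : Finset V) (g : Finset V → ℝ) (T : Finset (Option V)) : ℝ :=
  if none ∈ T then g (e \ down T) else g (down T)

/-- The lifted hyperedge `e' = e ∪ {*}`. -/
def liftE {V : Type*} [DecidableEq V] (e : Finset V) : Finset (Option V) :=
  insert none (e.image some)

/-- a `(1±ε)` cut sparsifier (reweighting `wHat`) of the symmetrized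
hypergraph `H'` on `V ∪ {*}` yields, keeping the same weights, a `(1±ε)` cut
sparsifier of the monotone submodular hypergraph `H` on `V`. -/
theorem symmetrized_sparsifier_transfers {V ι : Type*}
    [Fintype V] [DecidableEq V] [Fintype ι]
    (e : ι → Finset V) (g : ι → Finset V → ℝ)
    (hnn : ∀ i, ∀ S, 0 ≤ g i S)
    (hmono : ∀ i, ∀ S T : Finset V, S ⊆ T → T ⊆ e i → g i S ≤ g i T)
    (hsub : ∀ i, ∀ S T : Finset V, S ⊆ T → T ⊆ e i → ∀ x ∈ e i, x ∉ T →
      g i (insert x T) - g i T ≤ g i (insert x S) - g i S)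
    (w wHat : ι → ℝ) (hw : ∀ i, 0 ≤ w i) (hwHat : ∀ i, 0 ≤ wHat i) (ε : ℝ)
    (happrox : ∀ S : Finset (Option V),
      (1 - ε) * ∑ i, w i * symmSplit (e i) (g i) (S ∩ liftE (e i)) ≤
          ∑ i, wHat i * symmSplit (e i) (g i) (S ∩ liftE (e i)) ∧
        ∑ i, wHat i * symmSplit (e i) (g i) (S ∩ liftE (e i)) ≤
          (1 + ε) * ∑ i, w i * symmSplit (e i) (g i) (S ∩ liftE (e i))) :
    ∀ S : Finset V,
      (1 - ε) * ∑ i, w i * g i (S ∩ e i) ≤ ∑ i, wHat i * g i (S ∩ e i) ∧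
        ∑ i, wHat i * g i (S ∩ e i) ≤ (1 + ε) * ∑ i, w i * g i (S ∩ e i) := by
  intro S
  have key : ∀ i, symmSplit (e i) (g i) ((S.image some) ∩ liftE (e i)) = g i (S ∩ e i) := by
    intro i
    have hn : none ∉ (S.image some) ∩ liftE (e i) := by simp
    have hd : down ((S.image some) ∩ liftE (e i)) = S ∩ e i := by
      ext v; simp [down, liftE]
    simp [symmSplit, hn, hd]
  simpa [key] using happrox (S.image some)
end

section
/- Let f : 2^V → ℝ≥0 be monotone, * ∉ V, and define f' on 2^(V∪{*}) by f'(S) = f(S) if * ∉ S and f'(S) = f(V \ (S \ {*})) otherwise. Then for any T ⊆ V with * ∉ T and any U ⊆ V ∪ {*} with * ∈ U and T ⊆ U: f'(T ∪ {*}) − f'(T) = f(V \ T) − f(T), and this quantity is ≥ f'(U) − f'(U \ {*}) whenever additionally f is submodular. -/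
/-- the `x = *` case of submodularity of the symmetrization: for
`* ∉ T ⊆ U` with `* ∈ U`, one has `f'(T ∪ {*}) − f'(T) = f(V \ T) − f(T)`, and (using
submodularity of the monotone `f`) this is at least `f'(U) − f'(U \ {*})`. -/
theorem symmetrize_star_case {V : Type*} [Fintype V] [DecidableEq V] (f : Finset V → ℝ)
    (hmono : ∀ S T : Finset V, S ⊆ T → f S ≤ f T)
    (hsub : ∀ S T : Finset V, S ⊆ T → ∀ x ∉ T,
      f (insert x T) - f T ≤ f (insert x S) - f S)
    (T U : Finset (Option V)) (hT : none ∉ T) (hU : none ∈ U) (hTU : T ⊆ U) :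
    symmetrize f (insert none T) - symmetrize f T =
        f (Finset.univ \ down T) - f (down T) ∧
      symmetrize f U - symmetrize f (U.erase none) ≤
        symmetrize f (insert none T) - symmetrize f T := by
  have hdownIns : down (insert none T) = down T := by
    ext v; simp [down]
  have hdownErase : down (U.erase none) = down U := by
    ext v; simp [down]
  have hdownSub : down T ⊆ down U := by
    intro v hv
    simp only [down, Finset.mem_filter] at hv ⊢
    exact ⟨hv.1, hTU hv.2⟩
  have h1 : symmetrize f (insert none T) - symmetrize f T =
      f (Finset.univ \ down T) - f (down T) := by
    simp [symmetrize, hT, hdownIns]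
  refine ⟨h1, ?_⟩
  rw [h1]
  have h2 : symmetrize f U = f (Finset.univ \ down U) := by simp [symmetrize, hU]
  have h3 : symmetrize f (U.erase none) = f (down U) := by
    simp [symmetrize, Finset.notMem_erase, hdownErase]
  rw [h2, h3]
  have hc : f (Finset.univ \ down U) ≤ f (Finset.univ \ down T) :=
    hmono _ _ (Finset.sdiff_subset_sdiff le_rfl hdownSub)
  have hd : f (down T) ≤ f (down U) := hmono _ _ hdownSub
  linarith
end
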